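/- arXiv:1610.05671 — 2 statements merged into one kernel-verified Lean document; each statement's English description precedes it below -/
import Mathlib

section
/- Let $F : X \rightrightarrows Y$ be a closed convex set-valued mapping between Banach spaces, $A \subseteq X$ closed convex, $\bar y \in Y$, $S := F^{-1}(\bar y) \cap A$, $\bar x \in S$. Suppose there exist $\eta > 0$ and $\delta > 0$ such that for all $x \in S \cap B(\bar x,\delta)$ and all $\eta_1,\eta_2 \geq 0$ with $\eta_1 + \eta_2 < \eta$: $DF^{-1}(\bar y,x)(\eta_1 B_Y) \cap (T(A,x) + \eta_2 B_X) \subseteq T(S,x) + B_X$. Then for every $\tau > 1/\eta$: $d(x,S) \leq \tau(d(\bar y, F(x)) + d(x,A))$ for all $x \in B(\bar x, \delta/2)$. -/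
open Set Metric Filter Topology Pointwise

noncomputable section

/-- Contingent cone of a convex set: closure of ⋃_{t>0} (A - a)/t. -/
def contCone {X : Type*} [NormedAddCommGroup X] [NormedSpace ℝ X] (A : Set X) (a : X) : Set X :=
  closure {v : X | ∃ t : ℝ, 0 < t ∧ a + t • v ∈ A}

/-!
Fix `x` near `xbar` and `ε ∈ (0, 1)`. Ekeland's principle for `dist · x` on the closed convex set
`S = F⁻¹(ybar) ∩ A`, started at `xbar`, gives `z ∈ S ∩ B(xbar, δ)` minimizing
`dist · x + ε • dist · z` on `S`; by convexity `z` also minimizes it on `z + T(S, z)`.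
With `y ∈ F x`, `a ∈ A` almost nearest and `r` slightly above `(d(ybar, F x) + d(x, A)) / η`,
the vector `(x - z) / r` lies in the left-hand side of the inclusion at `z`, so it is `c + b` with
`c ∈ T(S, z)` and `‖b‖ ≤ 1`. Testing the minimality of `z` at `z + r • c` gives
`(1 - ε) d(z, x) ≤ (1 + ε) r`, and letting `ε → 0` yields
`d(x, S) ≤ (d(ybar, F x) + d(x, A)) / η ≤ τ (d(ybar, F x) + d(x, A))`.
-/

section Ekeland

variable {E : Type*} [MetricSpace E] {f : E → ℝ} {ε : ℝ}

def ekelandSet (f : E → ℝ) (ε : ℝ) (z : E) : Set E :=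
  {w | f w + ε * dist w z ≤ f z}

lemma self_mem_ekelandSet (z : E) : z ∈ ekelandSet f ε z := by
  simp [ekelandSet]

lemma ekelandSet_subset_of_mem (hε : 0 ≤ ε) {z w : E} (hw : w ∈ ekelandSet f ε z) :
    ekelandSet f ε w ⊆ ekelandSet f ε z := fun v hv => by
  have hvwz := mul_le_mul_of_nonneg_left (dist_triangle v w z) hε
  simp only [ekelandSet, mem_ofPred_eq] at hv hw ⊢
  linarith

lemma isClosed_ekelandSet (hf : LowerSemicontinuous f) (z : E) :
    IsClosed (ekelandSet f ε z) :=
  (hf.add (continuous_const.mul (continuous_id.dist continuous_const)).lowerSemicontinuous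
    ).isClosed_preimage (f z)

lemma exists_mem_ekelandSet_forall_lt_add (hf : BddBelow (range f)) (z : E) {δ : ℝ}
    (hδ : 0 < δ) : ∃ w ∈ ekelandSet f ε z, ∀ v ∈ ekelandSet f ε z, f w < f v + δ := by
  have hne : (f '' ekelandSet f ε z).Nonempty := ⟨f z, mem_image_of_mem f (self_mem_ekelandSet z)⟩
  have hbdd : BddBelow (f '' ekelandSet f ε z) := hf.mono (image_subset_range _ _)
  obtain ⟨_, ⟨w, hw, rfl⟩, hlt⟩ := exists_lt_of_csInf_lt hne (lt_add_of_pos_right _ hδ)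
  exact ⟨w, hw, fun v hv => hlt.trans_le (by gcongr; exact csInf_le hbdd (mem_image_of_mem f hv))⟩

lemma dist_lt_of_forall_lt_add (hε : 0 < ε) {z w : E} {δ : ℝ} (hw : w ∈ ekelandSet f ε z)
    (hmin : ∀ v ∈ ekelandSet f ε z, f w < f v + ε * δ) {v : E} (hv : v ∈ ekelandSet f ε w) :
    dist v w < δ := by
  have hvz := hmin v (ekelandSet_subset_of_mem hε.le hw hv)
  simp only [ekelandSet, mem_ofPred_eq] at hv
  exact lt_of_mul_lt_mul_left (by linarith) hε.le

theorem exists_mem_ekelandSet_forall_le [CompleteSpace E] (hf : LowerSemicontinuous f)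
    (hfb : BddBelow (range f)) (hε : 0 < ε) (x₀ : E) :
    ∃ z ∈ ekelandSet f ε x₀, ∀ w, f z ≤ f w + ε * dist w z := by
  choose g hgM hgmin using fun (n : ℕ) z =>
    exists_mem_ekelandSet_forall_lt_add (ε := ε) hfb z (δ := ε * (1 / (n + 1))) (by positivity)
  let p : ℕ → E := fun n => Nat.rec x₀ g n
  have hsmall : ∀ n, ∀ v ∈ ekelandSet f ε (p (n + 1)), dist v (p (n + 1)) < 1 / (n + 1) :=
    fun n _ => dist_lt_of_forall_lt_add hε (hgM n (p n)) (hgmin n (p n))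
  have hchain : ∀ n m, n ≤ m → ekelandSet f ε (p m) ⊆ ekelandSet f ε (p n) := by
    intro n m hnm
    induction m, hnm using Nat.le_induction with
    | base => exact subset_rfl
    | succ m _ ih => exact (ekelandSet_subset_of_mem hε.le (hgM m (p m))).trans ih
  have hmem : ∀ n m, n ≤ m → p m ∈ ekelandSet f ε (p n) :=
    fun n m hnm => hchain n m hnm (self_mem_ekelandSet _)
  have hcauchy : CauchySeq fun n => p (n + 1) :=
    cauchySeq_of_le_tendsto_0' (fun n : ℕ => 1 / ((n : ℝ) + 1))
      (fun n m hnm => by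
        rw [dist_comm]; exact (hsmall n _ (hmem (n + 1) (m + 1) (by omega))).le)
      tendsto_one_div_add_atTop_nhds_zero_nat
  obtain ⟨z, hz⟩ := cauchySeq_tendsto_of_complete hcauchy
  have hzM : ∀ n, z ∈ ekelandSet f ε (p n) := fun n =>
    (isClosed_ekelandSet hf _).mem_of_tendsto hz
      (eventually_atTop.2 ⟨n, fun m hm => hmem n (m + 1) (by omega)⟩)
  refine ⟨z, hzM 0, fun w => ?_⟩
  by_contra! hlt
  have hw : Tendsto (fun n => p (n + 1)) atTop (𝓝 w) := by
    refine tendsto_iff_dist_tendsto_zero.2 (squeeze_zero (fun _ => dist_nonneg) (fun n => ?_)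
      tendsto_one_div_add_atTop_nhds_zero_nat)
    rw [dist_comm]
    exact (hsmall n w (ekelandSet_subset_of_mem hε.le (hzM (n + 1)) hlt.le)).le
  obtain rfl := tendsto_nhds_unique hw hz
  simp at hlt

end Ekeland

theorem exists_isMinOn_dist_add_dist {X : Type*} [MetricSpace X] [CompleteSpace X] {S : Set X}
    (hS : IsClosed S) (x : X) {x₀ : X} (hx₀ : x₀ ∈ S) {ε : ℝ} (hε : 0 < ε) :
    ∃ z ∈ S, dist z x ≤ dist x₀ x ∧ IsMinOn (fun w => dist w x + ε * dist w z) S z := by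
  have := hS.completeSpace_coe
  obtain ⟨z, hz, hmin⟩ := exists_mem_ekelandSet_forall_le (f := fun w : S => dist (w : X) x)
    (continuous_subtype_val.dist continuous_const).lowerSemicontinuous ⟨0, by
      rintro _ ⟨w, rfl⟩; exact dist_nonneg⟩ hε ⟨x₀, hx₀⟩
  refine ⟨z, z.2, ?_, fun w hw => ?_⟩
  · have := mul_nonneg hε.le (dist_nonneg (x := z) (y := ⟨x₀, hx₀⟩))
    simp only [ekelandSet, mem_ofPred_eq] at hz
    linarith
  · simpa [Subtype.dist_eq] using hmin ⟨w, hw⟩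

section ContingentCone

variable {X : Type*} [NormedAddCommGroup X] [NormedSpace ℝ X] {A : Set X} {a : X} {r : ℝ}

lemma inv_smul_sub_mem_contCone (hr : 0 < r) {b : X} (hb : b ∈ A) :
    r⁻¹ • (b - a) ∈ contCone A a :=
  subset_closure ⟨r, hr, by simpa [smul_smul, hr.ne'] using hb⟩

lemma smul_mem_contCone (hr : 0 < r) {v : X} (hv : v ∈ contCone A a) :
    r • v ∈ contCone A a := by
  refine closure_mono ?_ (mem_closure_image (continuous_const_smul r).continuousAt hv)
  rintro _ ⟨v, ⟨t, ht, hA⟩, rfl⟩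
  exact ⟨t / r, div_pos ht hr, by rwa [smul_smul, div_mul_cancel₀ _ hr.ne']⟩

lemma ConvexOn.le_add_of_isMinOn_of_mem_contCone {g : X → ℝ} (hg : ConvexOn ℝ univ g)
    (hgc : Continuous g) (hA : Convex ℝ A) (ha : a ∈ A) (hmin : IsMinOn g A a) {v : X}
    (hv : v ∈ contCone A a) :
    g a ≤ g (a + v) := by
  refine closure_minimal ?_
    (isClosed_le continuous_const (hgc.comp (continuous_const.add continuous_id))) hv
  rintro v ⟨t, ht, hat⟩
  -- `a + s • v` lies both on the segment `[a, a + t • v] ⊆ A` and on `[a, a + v]`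
  obtain ⟨s, hs, hst, hs1⟩ : ∃ s : ℝ, 0 < s ∧ s ≤ t ∧ s ≤ 1 :=
    ⟨min t 1, lt_min ht one_pos, min_le_left _ _, min_le_right _ _⟩
  have has : a + s • v ∈ A := by
    simpa [smul_smul, div_mul_cancel₀ _ ht.ne'] using
      hA.add_smul_mem ha hat (t := s / t) ⟨by positivity, div_le_one_of_le₀ hst ht.le⟩
  have hconv : g (a + s • v) ≤ (1 - s) * g a + s * g (a + v) := by
    have hcomb : (1 - s) • a + s • (a + v) = a + s • v := by module
    simpa only [hcomb, smul_eq_mul] using hg.2 (mem_univ a) (mem_univ (a + v))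
      (sub_nonneg.2 hs1) hs.le (sub_add_cancel 1 s)
  have : s * g a ≤ s * g (a + v) := by linarith [isMinOn_iff.1 hmin _ has]
  exact le_of_mul_le_mul_left this hs

lemma inv_smul_sub_mem_closedBall (hr : 0 < r) (x y : X) :
    r⁻¹ • (x - y) ∈ closedBall (0 : X) (dist x y / r) := by
  rw [mem_closedBall_zero_iff, norm_smul, norm_inv, Real.norm_of_nonneg hr.le, ← dist_eq_norm,
    inv_mul_eq_div]

end ContingentCone

lemma le_of_forall_one_sub_mul_le_one_add_mul {a b : ℝ}
    (h : ∀ ε ∈ Ioo (0 : ℝ) 1, (1 - ε) * a ≤ (1 + ε) * (b + ε)) : a ≤ b := by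
  have hl : Tendsto (fun ε : ℝ => (1 - ε) * a) (𝓝[>] 0) (𝓝 a) :=
    ((continuous_const.sub continuous_id).mul continuous_const).tendsto' 0 a (by simp)
      |>.mono_left nhdsWithin_le_nhds
  have hr : Tendsto (fun ε : ℝ => (1 + ε) * (b + ε)) (𝓝[>] 0) (𝓝 b) :=
    ((continuous_const.add continuous_id).mul (continuous_const.add continuous_id)).tendsto' 0 b
      (by simp) |>.mono_left nhdsWithin_le_nhds
  exact le_of_tendsto_of_tendsto hl hr (eventually_of_mem (Ioo_mem_nhdsGT one_pos) h)

lemma ofReal_infDist {α : Type*} [PseudoMetricSpace α] {s : Set α} (hs : s.Nonempty)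
    (x : α) : ENNReal.ofReal (infDist x s) = infEDist x s :=
  ENNReal.ofReal_toReal (infEDist_ne_top hs)

lemma one_sub_mul_dist_le_of_mem_contCone_add_ball {X : Type*} [NormedAddCommGroup X]
    [NormedSpace ℝ X] {S : Set X} {x z : X} {ε r : ℝ}
    (hS : Convex ℝ S) (hε : 0 ≤ ε) (hz : z ∈ S)
    (hmin : IsMinOn (fun w => dist w x + ε * dist w z) S z) (hr : 0 < r)
    (hu : r⁻¹ • (x - z) ∈ contCone S z + closedBall (0 : X) 1) :
    (1 - ε) * dist z x ≤ (1 + ε) * r := by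
  obtain ⟨c, hc, b, hb, hcb⟩ := hu
  have hconv : ConvexOn ℝ univ fun w => dist w x + ε * dist w z :=
    (convexOn_dist x convex_univ).add ((convexOn_dist z convex_univ).smul hε)
  have hkey := hconv.le_add_of_isMinOn_of_mem_contCone (by fun_prop) hS hz hmin
    (smul_mem_contCone hr hc)
  change c + b = r⁻¹ • (x - z) at hcb
  have hrb : r • b = x - (z + r • c) := by
    have hsum : r • c + r • b = x - z := by rw [← smul_add, hcb, smul_inv_smul₀ hr.ne']
    rw [← sub_sub, ← hsum, add_sub_cancel_left]
  have hb' : ‖r • b‖ ≤ r := by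
    rw [norm_smul, Real.norm_of_nonneg hr.le]
    exact mul_le_of_le_one_right hr.le (mem_closedBall_zero_iff.1 hb)
  have hdist₁ : dist (z + r • c) x = ‖r • b‖ := by rw [hrb, dist_comm, dist_eq_norm]
  have hdist₂ : dist (z + r • c) z ≤ dist z x + ‖r • b‖ := by
    rw [dist_eq_norm, add_sub_cancel_left, dist_comm, dist_eq_norm,
      show r • c = (x - z) - r • b by rw [hrb]; abel]
    exact norm_sub_le _ _
  simp only [dist_self, mul_zero, add_zero] at hkey
  nlinarith [mul_le_mul_of_nonneg_left hdist₂ hε]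

theorem infDist_le_div_of_forall_mem_contCone_add_ball {X Y : Type*} [NormedAddCommGroup X]
    [NormedSpace ℝ X] [CompleteSpace X] [NormedAddCommGroup Y] [NormedSpace ℝ Y]
    {F : X → Set Y} {A : Set X} {ybar : Y} {xbar : X} {η δ : ℝ}
    (hScl : IsClosed ({x : X | ybar ∈ F x} ∩ A)) (hScv : Convex ℝ ({x : X | ybar ∈ F x} ∩ A))
    (hxbar : xbar ∈ {x : X | ybar ∈ F x} ∩ A) (hη : 0 < η)
    (hincl : ∀ x ∈ ({x : X | ybar ∈ F x} ∩ A) ∩ ball xbar δ,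
      ∀ η₁ η₂ : ℝ, 0 ≤ η₁ → 0 ≤ η₂ → η₁ + η₂ < η →
        {u : X | ∃ v ∈ closedBall (0 : Y) η₁,
            (u, v) ∈ contCone {p : X × Y | p.2 ∈ F p.1} (x, ybar)} ∩
          (contCone A x + closedBall (0 : X) η₂) ⊆
        contCone ({x : X | ybar ∈ F x} ∩ A) x + closedBall (0 : X) 1)
    {x : X} (hx : x ∈ ball xbar (δ / 2)) (hFx : (F x).Nonempty) :
    infDist x ({x : X | ybar ∈ F x} ∩ A) ≤ (infDist ybar (F x) + infDist x A) / η := by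
  set S := {x : X | ybar ∈ F x} ∩ A
  set φ := infDist ybar (F x) + infDist x A
  refine le_of_forall_one_sub_mul_le_one_add_mul fun ε ⟨hε, hε1⟩ => ?_
  -- starting Ekeland's principle at `xbar` keeps `z` within `δ` of `xbar`
  obtain ⟨z, hzS, hzx, hmin⟩ := exists_isMinOn_dist_add_dist hScl x hxbar hε
  have hzball : z ∈ ball xbar δ := by
    rw [mem_ball] at hx ⊢
    linarith [dist_triangle z x xbar, dist_comm xbar x]
  set r := φ / η + ε
  have hr : 0 < r := by
    have : 0 ≤ φ := add_nonneg infDist_nonneg infDist_nonneg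
    positivity
  obtain ⟨y, hy, hyd⟩ := (infDist_lt_iff hFx).1
    (lt_add_of_pos_right (infDist ybar (F x)) (half_pos (mul_pos hε hη)))
  obtain ⟨a, ha, had⟩ := (infDist_lt_iff ⟨xbar, hxbar.2⟩).1
    (lt_add_of_pos_right (infDist x A) (half_pos (mul_pos hε hη)))
  have hη₁₂ : dist y ybar / r + dist x a / r < η := by
    have hrη : η * r = φ + η * ε := by rw [mul_add, mul_div_cancel₀ _ hη.ne']
    rw [← add_div, div_lt_iff₀ hr, hrη, dist_comm]
    linarith
  have hu : r⁻¹ • (x - z) ∈ contCone S z + closedBall (0 : X) 1 :=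
    hincl z ⟨hzS, hzball⟩ _ _ (by positivity) (by positivity) hη₁₂
    ⟨⟨_, inv_smul_sub_mem_closedBall hr y ybar, inv_smul_sub_mem_contCone hr (b := (x, y)) hy⟩,
      ⟨_, inv_smul_sub_mem_contCone hr ha, _, inv_smul_sub_mem_closedBall hr x a,
        by simp only [← smul_add, sub_add_sub_cancel']⟩⟩
  calc (1 - ε) * infDist x S ≤ (1 - ε) * dist z x := by
        rw [dist_comm]
        exact mul_le_mul_of_nonneg_left (infDist_le_dist_of_mem hzS) (by linarith)
    _ ≤ (1 + ε) * r := one_sub_mul_dist_le_of_mem_contCone_add_ball hScv hε.le hzS hmin hr hu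

theorem stmt11_general {X Y : Type*} [NormedAddCommGroup X] [NormedSpace ℝ X] [CompleteSpace X]
    [NormedAddCommGroup Y] [NormedSpace ℝ Y]
    (F : X → Set Y) (hFcl : IsClosed {p : X × Y | p.2 ∈ F p.1})
    (hFcv : Convex ℝ {p : X × Y | p.2 ∈ F p.1})
    (A : Set X) (hAcl : IsClosed A) (hAcv : Convex ℝ A)
    (ybar : Y) (xbar : X) (hxbar : xbar ∈ {x : X | ybar ∈ F x} ∩ A)
    (η δ : ℝ) (hη : 0 < η)
    (hincl : ∀ x ∈ ({x : X | ybar ∈ F x} ∩ A) ∩ ball xbar δ,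
      ∀ η₁ η₂ : ℝ, 0 ≤ η₁ → 0 ≤ η₂ → η₁ + η₂ < η →
        {u : X | ∃ v ∈ closedBall (0 : Y) η₁,
            (u, v) ∈ contCone {p : X × Y | p.2 ∈ F p.1} (x, ybar)} ∩
          (contCone A x + closedBall (0 : X) η₂) ⊆
        contCone ({x : X | ybar ∈ F x} ∩ A) x + closedBall (0 : X) 1) :
    ∀ τ : ℝ, 1 / η < τ →
      ∀ x ∈ ball xbar (δ / 2),
        EMetric.infEdist x ({x : X | ybar ∈ F x} ∩ A) ≤
          ENNReal.ofReal τ * (EMetric.infEdist ybar (F x) + EMetric.infEdist x A) := by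
  intro τ hτ x hx
  unfold EMetric.infEdist
  have hτ0 : 0 < τ := (one_div_pos.2 hη).trans hτ
  rcases (F x).eq_empty_or_nonempty with hFx | hFx
  · simp [hFx, hτ0]
  have hScl : IsClosed ({x : X | ybar ∈ F x} ∩ A) :=
    (hFcl.preimage (by fun_prop : Continuous fun x : X => (x, ybar))).inter hAcl
  have hScv : Convex ℝ ({x : X | ybar ∈ F x} ∩ A) :=
    (hFcv.affine_preimage ((AffineMap.id ℝ X).prod (AffineMap.const ℝ X ybar))).inter hAcv
  have hreal := infDist_le_div_of_forall_mem_contCone_add_ball hScl hScv hxbar hη hincl hx hFx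
  simp only [← ofReal_infDist ⟨xbar, hxbar⟩, ← ofReal_infDist hFx,
    ← ofReal_infDist ⟨xbar, hxbar.2⟩, ← ENNReal.ofReal_add infDist_nonneg infDist_nonneg,
    ← ENNReal.ofReal_mul hτ0.le]
  refine ENNReal.ofReal_le_ofReal (hreal.trans ?_)
  rw [div_eq_inv_mul, ← one_div]
  gcongr
  exact add_nonneg infDist_nonneg infDist_nonneg

theorem stmt11 {X Y : Type*} [NormedAddCommGroup X] [NormedSpace ℝ X] [CompleteSpace X]
    [NormedAddCommGroup Y] [NormedSpace ℝ Y] [CompleteSpace Y]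
    (F : X → Set Y) (hFcl : IsClosed {p : X × Y | p.2 ∈ F p.1})
    (hFcv : Convex ℝ {p : X × Y | p.2 ∈ F p.1})
    (A : Set X) (hAcl : IsClosed A) (hAcv : Convex ℝ A)
    (ybar : Y) (xbar : X) (hxbar : xbar ∈ {x : X | ybar ∈ F x} ∩ A)
    (η δ : ℝ) (hη : 0 < η) (hδ : 0 < δ)
    (hincl : ∀ x ∈ ({x : X | ybar ∈ F x} ∩ A) ∩ ball xbar δ,
      ∀ η₁ η₂ : ℝ, 0 ≤ η₁ → 0 ≤ η₂ → η₁ + η₂ < η →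
        {u : X | ∃ v ∈ closedBall (0 : Y) η₁,
            (u, v) ∈ contCone {p : X × Y | p.2 ∈ F p.1} (x, ybar)} ∩
          (contCone A x + closedBall (0 : X) η₂) ⊆
        contCone ({x : X | ybar ∈ F x} ∩ A) x + closedBall (0 : X) 1) :
    ∀ τ : ℝ, 1 / η < τ →
      ∀ x ∈ ball xbar (δ / 2),
        EMetric.infEdist x ({x : X | ybar ∈ F x} ∩ A) ≤
          ENNReal.ofReal τ * (EMetric.infEdist ybar (F x) + EMetric.infEdist x A) :=
  stmt11_general F hFcl hFcv A hAcl hAcv ybar xbar hxbar η δ hη hincl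
end
end

section
/- Let $F : X \rightrightarrows Y$ be a closed convex set-valued mapping between Banach spaces, $A \subseteq X$ closed convex, $\bar y \in Y$, $S := F^{-1}(\bar y) \cap A$, $\bar x \in S$, and $x \in S$. Suppose there exist $\eta > 0$ such that for all $\eta_1, \eta_2 \geq 0$ with $\eta_1 + \eta_2 < \eta$: $DF^{-1}(\bar y, x)(\eta_1 B_Y) \cap (T(A,x) + \eta_2 B_X) \subseteq T(S,x) + B_X$. Then for every $\tau > 1/\eta$ and every $h \in X$: $d(h, T(S,x)) \leq \tau\,(d(0, DF(x,\bar y)(h)) + d(h, T(A,x)))$. -/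
/-!
Both sides of the estimate are positively homogeneous in `h`, and all the sets involved are
cones. For `p > d(0, DF(x, ȳ)(h))` and `q > d(h, T(A, x))` pick `v ∈ DF(x, ȳ)(h)` with `‖v‖ < p`
and `w ∈ T(A, x)` with `‖h - w‖ < q`, and rescale by `s = τ (p + q)`: then `s⁻¹ h` lies in
`DF⁻¹(ȳ, x)(η₁ B_Y) ∩ (T(A, x) + η₂ B_X)` with `η₁ + η₂ < 1 / τ < η`, hence in `T(S, x) + B_X`,
and scaling back gives `d(h, T(S, x)) ≤ s`.
-/

open Set Metric Filter Topology Pointwise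

noncomputable section

lemma smul_mem_contCone_s12 {X : Type*} [NormedAddCommGroup X] [NormedSpace ℝ X]
    {A : Set X} {a v : X} {c : ℝ} (hc : 0 < c) (hv : v ∈ contCone A a) :
    c • v ∈ contCone A a := by
  refine map_mem_closure (continuous_const_smul c) hv ?_
  rintro y ⟨t, ht, hA⟩
  exact ⟨t / c, div_pos ht hc, by rwa [smul_smul, div_mul_cancel₀ _ hc.ne']⟩

lemma Metric.exists_dist_lt_of_infEDist_lt_ofReal {E : Type*} [PseudoMetricSpace E]
    {x : E} {s : Set E} {r : ℝ} (h : infEDist x s < ENNReal.ofReal r) :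
    ∃ y ∈ s, dist x y < r := by
  obtain ⟨y, hys, hxy⟩ := infEDist_lt_iff.mp h
  exact ⟨y, hys, edist_lt_ofReal.mp hxy⟩

lemma Metric.infEDist_le_of_inv_smul_mem_add_closedBall {E : Type*} [NormedAddCommGroup E]
    [NormedSpace ℝ E] {C : Set E} (hC : ∀ c : ℝ, 0 < c → ∀ u ∈ C, c • u ∈ C)
    {h : E} {s : ℝ} (hs : 0 < s) (hmem : s⁻¹ • h ∈ C + closedBall (0 : E) 1) :
    infEDist h C ≤ ENNReal.ofReal s := by
  obtain ⟨u, huC, e, he, hue⟩ := Set.mem_add.mp hmem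
  rw [mem_closedBall_zero_iff] at he
  have hh : h = s • u + s • e := by rw [← smul_add, hue, smul_inv_smul₀ hs.ne']
  calc infEDist h C ≤ edist h (s • u) := infEDist_le_edist_of_mem (hC s hs u huC)
    _ = ENNReal.ofReal ‖s • e‖ := by rw [edist_dist, dist_eq_norm, hh, add_sub_cancel_left]
    _ ≤ ENNReal.ofReal s := by
        gcongr
        rw [norm_smul, Real.norm_of_nonneg hs.le]
        exact mul_le_of_le_one_right hs.le he

lemma ENNReal.le_ofReal_mul_add_of_forall_lt {a b d : ENNReal} {τ : ℝ} (hτ : 0 < τ)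
    (H : ∀ p q : ℝ, a < ENNReal.ofReal p → b < ENNReal.ofReal q →
      d ≤ ENNReal.ofReal (τ * (p + q))) :
    d ≤ ENNReal.ofReal τ * (a + b) := by
  refine le_of_forall_gt_imp_ge_of_dense fun r hr => ?_
  have hab : a + b ≠ ⊤ := by
    intro hab
    rw [hab, ENNReal.mul_top (ENNReal.ofReal_pos.mpr hτ).ne'] at hr
    exact not_top_lt hr
  obtain ⟨ha, hb⟩ := ENNReal.add_ne_top.mp hab
  obtain rfl | hr_top := eq_or_ne r ⊤
  · exact le_top
  have hlt : τ * (a.toReal + b.toReal) < r.toReal := by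
    rwa [← ENNReal.ofReal_toReal ha, ← ENNReal.ofReal_toReal hb,
      ← ENNReal.ofReal_add ENNReal.toReal_nonneg ENNReal.toReal_nonneg,
      ← ENNReal.ofReal_mul hτ.le, ← ENNReal.ofReal_toReal hr_top,
      ENNReal.ofReal_lt_ofReal_iff_of_nonneg (by positivity)] at hr
  set δ := (r.toReal / τ - a.toReal - b.toReal) / 2
  have hδ : 0 < δ := by
    have := (lt_div_iff₀' hτ).mpr hlt
    simp only [δ]
    linarith
  have lt_add_δ : ∀ c : ENNReal, c ≠ ⊤ → c < ENNReal.ofReal (c.toReal + δ) := fun c hc => by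
    rw [← ENNReal.ofReal_toReal hc, ENNReal.toReal_ofReal ENNReal.toReal_nonneg]
    exact (ENNReal.ofReal_lt_ofReal_iff (by positivity)).mpr (by linarith)
  have hsum : τ * (a.toReal + δ + (b.toReal + δ)) = r.toReal := by
    simp only [δ]
    field_simp
    ring
  calc d ≤ ENNReal.ofReal (τ * (a.toReal + δ + (b.toReal + δ))) :=
        H _ _ (lt_add_δ a ha) (lt_add_δ b hb)
    _ = r := by rw [hsum, ENNReal.ofReal_toReal hr_top]

theorem stmt12_general {X Y : Type*} [NormedAddCommGroup X] [NormedSpace ℝ X]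
    [NormedAddCommGroup Y] [NormedSpace ℝ Y]
    (F : X → Set Y) (A : Set X) (ybar : Y) (x : X)
    (η : ℝ) (hη : 0 < η)
    (hincl : ∀ η₁ η₂ : ℝ, 0 ≤ η₁ → 0 ≤ η₂ → η₁ + η₂ < η →
      {u : X | ∃ v ∈ closedBall (0 : Y) η₁,
          (u, v) ∈ contCone {p : X × Y | p.2 ∈ F p.1} (x, ybar)} ∩
        (contCone A x + closedBall (0 : X) η₂) ⊆
      contCone ({x : X | ybar ∈ F x} ∩ A) x + closedBall (0 : X) 1) :
    ∀ τ : ℝ, 1 / η < τ → ∀ h : X,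
      EMetric.infEdist h (contCone ({x : X | ybar ∈ F x} ∩ A) x) ≤
        ENNReal.ofReal τ *
          (EMetric.infEdist (0 : Y)
              {v : Y | (h, v) ∈ contCone {p : X × Y | p.2 ∈ F p.1} (x, ybar)} +
            EMetric.infEdist h (contCone A x)) := by
  intro τ hτ h
  have hτ0 : 0 < τ := (one_div_pos.mpr hη).trans hτ
  refine ENNReal.le_ofReal_mul_add_of_forall_lt hτ0 fun p q hp hq => ?_
  obtain ⟨v, hv, hvp⟩ := exists_dist_lt_of_infEDist_lt_ofReal hp
  obtain ⟨w, hw, hwq⟩ := exists_dist_lt_of_infEDist_lt_ofReal hq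
  rw [dist_zero_left] at hvp
  have hpq : 0 < p + q := by linarith [norm_nonneg v, dist_nonneg (x := h) (y := w)]
  set s := τ * (p + q)
  have hs : 0 < s := mul_pos hτ0 hpq
  have hsum : ‖v‖ / s + dist h w / s < η :=
    calc ‖v‖ / s + dist h w / s = (‖v‖ + dist h w) / s := (add_div _ _ _).symm
      _ < (p + q) / s := by gcongr
      _ = 1 / τ := by rw [div_eq_div_iff hs.ne' hτ0.ne']; ring
      _ < η := (one_div_lt hη hτ0).mp hτ
  refine infEDist_le_of_inv_smul_mem_add_closedBall (fun c hc u hu => smul_mem_contCone_s12 hc hu) hs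
    (hincl _ _ (by positivity) (by positivity) hsum ⟨⟨s⁻¹ • v, ?_, ?_⟩, ?_⟩)
  · rw [mem_closedBall_zero_iff, norm_smul, norm_inv, Real.norm_of_nonneg hs.le, inv_mul_eq_div]
  · simpa using smul_mem_contCone_s12 (inv_pos.mpr hs) hv
  · refine ⟨s⁻¹ • w, smul_mem_contCone_s12 (inv_pos.mpr hs) hw, s⁻¹ • (h - w), ?_, ?_⟩
    · rw [mem_closedBall_zero_iff, norm_smul, norm_inv, Real.norm_of_nonneg hs.le,
        inv_mul_eq_div, ← dist_eq_norm]
    · change s⁻¹ • w + s⁻¹ • (h - w) = s⁻¹ • h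
      rw [← smul_add, add_sub_cancel]

theorem stmt12 {X Y : Type*} [NormedAddCommGroup X] [NormedSpace ℝ X] [CompleteSpace X]
    [NormedAddCommGroup Y] [NormedSpace ℝ Y] [CompleteSpace Y]
    (F : X → Set Y) (hFcl : IsClosed {p : X × Y | p.2 ∈ F p.1})
    (hFcv : Convex ℝ {p : X × Y | p.2 ∈ F p.1})
    (A : Set X) (hAcl : IsClosed A) (hAcv : Convex ℝ A)
    (ybar : Y) (xbar : X) (hxbar : xbar ∈ {x : X | ybar ∈ F x} ∩ A)
    (x : X) (hx : x ∈ {x : X | ybar ∈ F x} ∩ A)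
    (η : ℝ) (hη : 0 < η)
    (hincl : ∀ η₁ η₂ : ℝ, 0 ≤ η₁ → 0 ≤ η₂ → η₁ + η₂ < η →
      {u : X | ∃ v ∈ closedBall (0 : Y) η₁,
          (u, v) ∈ contCone {p : X × Y | p.2 ∈ F p.1} (x, ybar)} ∩
        (contCone A x + closedBall (0 : X) η₂) ⊆
      contCone ({x : X | ybar ∈ F x} ∩ A) x + closedBall (0 : X) 1) :
    ∀ τ : ℝ, 1 / η < τ → ∀ h : X,
      EMetric.infEdist h (contCone ({x : X | ybar ∈ F x} ∩ A) x) ≤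
        ENNReal.ofReal τ *
          (EMetric.infEdist (0 : Y)
              {v : Y | (h, v) ∈ contCone {p : X × Y | p.2 ∈ F p.1} (x, ybar)} +
            EMetric.infEdist h (contCone A x)) :=
  stmt12_general F A ybar x η hη hincl
end
end
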